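/- arXiv:math/0306060 — 5 statements merged into one kernel-verified Lean document; each statement's English description precedes it below -/
import Mathlib

section
/- The polynomial h(x,y) = (y²+y+1)x³+(y³+1)x²+(y³+y)x+(y³+y²) is irreducible over the algebraic closure of F₂ (i.e., absolutely irreducible as a polynomial in two variables over F₂). -/
noncomputable section Aux2

abbrev KK2 := AlgebraicClosure (ZMod 2)

noncomputable def phi2 : MvPolynomial (Fin 2) KK2 ≃ₐ[KK2] Polynomial (Polynomial KK2) :=
  (MvPolynomial.finSuccEquiv KK2 1).trans (Polynomial.mapAlgEquiv
    ((MvPolynomial.finSuccEquiv KK2 0).trans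
      (Polynomial.mapAlgEquiv (MvPolynomial.isEmptyAlgEquiv KK2 (Fin 0)))))

lemma phi2_X0 : phi2 (MvPolynomial.X 0) = Polynomial.X := by
  simp [phi2, MvPolynomial.finSuccEquiv_X_zero]

lemma phi2_X1 : phi2 (MvPolynomial.X 1) = Polynomial.C Polynomial.X := by
  simp [phi2, MvPolynomial.finSuccEquiv_apply]
  rw [show (Fin.cases Polynomial.X (fun k => Polynomial.C (MvPolynomial.X k)) (1 : Fin 2) :
      Polynomial (MvPolynomial (Fin 1) KK2)) = Polynomial.C (MvPolynomial.X 0) from rfl]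
  simp [MvPolynomial.finSuccEquiv_X_zero]

open Polynomial in
lemma irred_f2 :
    Irreducible (Polynomial.C (X ^ 2 + X + 1) * Polynomial.X ^ 3
      + Polynomial.C (X ^ 3 + 1) * Polynomial.X ^ 2
      + Polynomial.C (X ^ 3 + X) * Polynomial.X
      + Polynomial.C (X ^ 3 + X ^ 2) : Polynomial (Polynomial KK2)) := by
  set a3 : Polynomial KK2 := X ^ 2 + X + 1 with ha3def
  set a2 : Polynomial KK2 := X ^ 3 + 1 with ha2def
  set a1 : Polynomial KK2 := X ^ 3 + X with ha1def
  set a0 : Polynomial KK2 := X ^ 3 + X ^ 2 with ha0def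
  have h2K : (2 : KK2) = 0 := by
    have := CharP.cast_eq_zero KK2 2
    exact_mod_cast this
  have h2p : (2 : Polynomial KK2) = 0 := by
    rw [← map_ofNat (Polynomial.C : KK2 →+* Polynomial KK2) 2, h2K]
    exact map_zero _
  have ha3 : a3 ≠ 0 := by
    intro h
    have := congrArg (Polynomial.eval 0) h
    simp [ha3def] at this
  have hXne : (X + 1 : Polynomial KK2) ≠ 0 := by
    intro h
    have := congrArg (Polynomial.eval 0) h
    simp at this
  have hprime : Prime (X + 1 : Polynomial KK2) := by
    have h1 : (X + 1 : Polynomial KK2) = X + C 1 := by rw [C_1]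
    rw [h1]
    exact (monic_X_add_C (1 : KK2)).prime_of_degree_eq_one (degree_X_add_C _)
  set f : Polynomial (Polynomial KK2) :=
    Polynomial.C a3 * Polynomial.X ^ 3 + Polynomial.C a2 * Polynomial.X ^ 2
      + Polynomial.C a1 * Polynomial.X + Polynomial.C a0 with hfdef
  have hdeg : f.degree = 3 := degree_cubic ha3
  have hc0 : f.coeff 0 = a0 := by simp [hfdef]
  have hc1 : f.coeff 1 = a1 := by simp [hfdef]
  have hc2 : f.coeff 2 = a2 := by
    simp [hfdef, Polynomial.coeff_add, Polynomial.coeff_C_mul, Polynomial.coeff_X_pow,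
      Polynomial.coeff_X, Polynomial.coeff_C]
  have hc3 : f.coeff 3 = a3 := by
    simp [hfdef, Polynomial.coeff_add, Polynomial.coeff_C_mul, Polynomial.coeff_X_pow,
      Polynomial.coeff_X, Polynomial.coeff_C]
  set P : Ideal (Polynomial KK2) := Ideal.span {X + 1} with hPdef
  have hP : P.IsPrime := (Ideal.span_singleton_prime hXne).mpr hprime
  apply irreducible_of_eisenstein_criterion hP
  · -- leading coeff not in P
    rw [show f.leadingCoeff = a3 from leadingCoeff_cubic ha3, hPdef, Ideal.mem_span_singleton]
    rintro ⟨c, hc⟩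
    have := congrArg (Polynomial.eval 1) hc
    simp [ha3def] at this
    rw [one_add_one_eq_two, h2K] at this
    simp at this
  · -- lower coeffs in P
    intro n hn
    rw [hdeg] at hn
    have hn3 : n < 3 := by exact_mod_cast hn
    interval_cases n
    · rw [hc0, hPdef, Ideal.mem_span_singleton]
      exact ⟨X ^ 2, by rw [ha0def]; ring⟩
    · rw [hc1, hPdef, Ideal.mem_span_singleton]
      exact ⟨X ^ 2 + X, by rw [ha1def]; linear_combination (-X^2 : Polynomial KK2) * h2p⟩
    · rw [hc2, hPdef, Ideal.mem_span_singleton]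
      exact ⟨X ^ 2 + X + 1, by rw [ha2def]; linear_combination (-X^2 - X : Polynomial KK2) * h2p⟩
  · rw [hdeg]; norm_num
  · -- coeff 0 not in P^2
    rw [hc0, hPdef, Ideal.span_singleton_pow, Ideal.mem_span_singleton]
    rintro ⟨c, hc⟩
    have h2 : (X + 1 : Polynomial KK2) * X ^ 2 = (X + 1) * ((X + 1) * c) := by
      rw [ha0def] at hc
      linear_combination hc
    have hx : (X ^ 2 : Polynomial KK2) = (X + 1) * c := mul_left_cancel₀ hXne h2
    have := congrArg (Polynomial.eval 1) hx
    simp at this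
    rw [one_add_one_eq_two, h2K] at this
    simp at this
  · -- primitive
    intro r hr
    rw [Polynomial.C_dvd_iff_dvd_coeff] at hr
    have h3 := hr 3
    have h0 := hr 0
    rw [hc3] at h3
    rw [hc0] at h0
    apply isUnit_of_dvd_one
    have hdvd : r ∣ a3 * a3 + (X + 1) * a0 := dvd_add (h3.mul_left a3) (h0.mul_left (X + 1))
    have heq : a3 * a3 + (X + 1) * a0 = 1 := by
      rw [ha3def, ha0def]
      linear_combination (X^4 + 2*X^3 + 2*X^2 + X : Polynomial KK2) * h2p
    rwa [heq] at hdvd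

end Aux2

open MvPolynomial

theorem stmt_2 :
    Irreducible
      ((X 1 ^ 2 + X 1 + 1) * X 0 ^ 3 + (X 1 ^ 3 + 1) * X 0 ^ 2
        + (X 1 ^ 3 + X 1) * X 0 + (X 1 ^ 3 + X 1 ^ 2) :
        MvPolynomial (Fin 2) (AlgebraicClosure (ZMod 2))) := by
  rw [← MulEquiv.irreducible_iff phi2]
  have hφ : phi2
      ((X 1 ^ 2 + X 1 + 1) * X 0 ^ 3 + (X 1 ^ 3 + 1) * X 0 ^ 2
        + (X 1 ^ 3 + X 1) * X 0 + (X 1 ^ 3 + X 1 ^ 2))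
      = Polynomial.C (Polynomial.X ^ 2 + Polynomial.X + 1) * Polynomial.X ^ 3
        + Polynomial.C (Polynomial.X ^ 3 + 1) * Polynomial.X ^ 2
        + Polynomial.C (Polynomial.X ^ 3 + Polynomial.X) * Polynomial.X
        + Polynomial.C (Polynomial.X ^ 3 + Polynomial.X ^ 2) := by
    simp only [map_add, map_mul, map_pow, map_one, phi2_X0, phi2_X1, Polynomial.C_add,
      Polynomial.C_pow, Polynomial.C_1]
  rw [hφ]
  exact irred_f2
end

section
/- Let q = 2^m with m even, m ≥ 4, and let a₁ be an odd integer with |a₁| ≤ 4√q and |a₁| ≠ 3√q − 1. Set a₂ = 2|a₁|√q − 2q + √q and Δ = a₁² − 4a₂ + 8q = (4√q − |a₁|)² − 4√q. Then Δ is not the square of an integer. -/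
theorem stmt_8 (m : ℕ) (hm : Even m) (hm4 : 4 ≤ m) (a₁ : ℤ) (ha : Odd a₁)
    (hle : |a₁| ≤ 4 * 2^(m/2)) (hne : |a₁| ≠ 3 * 2^(m/2) - 1) :
    ¬ IsSquare ((4 * 2^(m/2) - |a₁|)^2 - 4 * 2^(m/2) : ℤ) := by
  rintro ⟨r, hr⟩
  set k := m / 2 with hkdef
  have hk2 : 2 ≤ k := by omega
  set s : ℤ := 2 ^ k with hs
  have hs4 : (4 : ℤ) ≤ s := by
    calc (4:ℤ) = 2^2 := by norm_num
    _ ≤ 2^k := pow_le_pow_right₀ (by norm_num) hk2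
  set b : ℤ := 4 * s - |a₁| with hb
  have habs : Odd |a₁| := by
    rcases abs_choice a₁ with h | h <;> rw [h]
    · exact ha
    · exact ha.neg
  have hbodd : Odd b := Even.sub_odd ⟨2 * s, by ring⟩ habs
  set c : ℤ := |r| with hc
  have hc2 : b ^ 2 - 4 * s = c ^ 2 := by
    rw [hr, hc, sq_abs, sq]
  have hcodd : Odd c := by
    have h1 : Odd (c ^ 2) := by
      rw [← hc2]
      exact hbodd.pow.sub_even ⟨2 * s, by ring⟩
    rw [sq] at h1
    rcases Int.even_or_odd c with h | h
    · exact absurd h1 (Int.not_odd_iff_even.mpr (h.mul_left c))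
    · exact h
  have hb0 : 0 ≤ b := by rw [hb]; linarith
  have hc0 : 0 ≤ c := abs_nonneg r
  have hbc : c < b := by nlinarith [hc2]
  -- b - c and b + c are even
  obtain ⟨u, hu⟩ : Even (b - c) := hbodd.sub_odd hcodd
  obtain ⟨v, hv⟩ : Even (b + c) := hbodd.add_odd hcodd
  have hu2 : b - c = 2 * u := by linarith
  have hv2 : b + c = 2 * v := by linarith
  have huv : u * v = s := by nlinarith [hc2]
  have hu1 : 1 ≤ u := by nlinarith
  have huv' : u ≤ v := by linarith
  have hbuv : b = u + v := by linarith
  have honeodd : Odd (u + v) := hbuv ▸ hbodd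
  have hdvd2 : ∀ w : ℤ, Odd w → w ∣ s → IsUnit w := by
    intro w hw hwd
    have hw' : ¬ (2 : ℤ) ∣ w := by
      rw [Int.odd_iff] at hw
      omega
    have hcop : IsCoprime w (2 : ℤ) :=
      ((Int.prime_two.coprime_iff_not_dvd).mpr hw').symm
    exact (hcop.pow_right).isUnit_of_dvd (hs ▸ hwd)
  rcases Int.even_or_odd u with hue | huo
  · -- u even, so v odd, v = 1, u = s ≥ 4, but u ≤ v = 1
    have hvo : Odd v := by
      rcases Int.even_or_odd v with h | h
      · exact absurd honeodd (Int.not_odd_iff_even.mpr (hue.add h))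
      · exact h
    have : IsUnit v := hdvd2 v hvo ⟨u, by linarith [huv]⟩
    have hv1 : v = 1 := by
      rcases Int.isUnit_iff.mp this with h | h
      · exact h
      · exfalso; rw [h] at huv'; linarith
    rw [hv1] at huv huv'
    linarith
  · -- u odd, u = 1, v = s, b = s + 1, contradiction with hne
    have : IsUnit u := hdvd2 u huo ⟨v, huv.symm⟩
    have hu1' : u = 1 := by
      rcases Int.isUnit_iff.mp this with h | h
      · exact h
      · exfalso; rw [h] at hu1; linarith
    rw [hu1'] at huv hbuv
    apply hne
    have : |a₁| = 3 * s - 1 := by rw [hb] at hbuv; linarith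
    rw [this, hs]
end

section
/- Let m be odd, q = 2^m, q' = 2^{(m+1)/2}, a₁ an odd integer, and a₂ an integer divisible by q'. Then δ = (a₂ + 2q)² − 4q·a₁² is not a square in the 2-adic integers Z₂. -/
lemma notsq_aux (u : ℤ) (h : u % 8 = 2 ∨ u % 8 = 6 ∨ u % 8 = 7) :
    ¬ IsSquare ((u : ℤ_[2])) := by
  intro hsq
  have h1 : IsSquare (((u : ℤ) : ZMod (2^3))) := by
    have := hsq.map (PadicInt.toZModPow (p := 2) 3)
    rwa [map_intCast] at this
  have h2 : ((u : ℤ) : ZMod (2^3)) = ((u % 8 : ℤ) : ZMod (2^3)) := by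
    conv_lhs => rw [show u = 8 * (u / 8) + u % 8 from by omega]
    push_cast
    rw [show (8 : ZMod (2^3)) = 0 from by decide]; ring
  rw [h2] at h1
  rcases h with h | h | h <;> rw [h] at h1 <;> revert h1 <;> decide

lemma odd_sq_mod8 (a : ℤ) (ha : Odd a) : ∃ s, a^2 = 8*s + 1 := by
  obtain ⟨t, rfl⟩ := ha
  obtain ⟨s, hs⟩ := Int.even_mul_succ_self t
  exact ⟨s, by nlinarith⟩

theorem stmt_10 (m : ℕ) (hm : Odd m) (hm1 : 1 ≤ m) (a₁ a₂ : ℤ) (ha : Odd a₁)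
    (hdvd : (2:ℤ)^((m+1)/2) ∣ a₂) :
    ¬ IsSquare (((a₂ + 2 * 2^m)^2 - 4 * 2^m * a₁^2 : ℤ) : ℤ_[2]) := by
  obtain ⟨n, rfl⟩ := hm
  have hk : (2*n+1+1)/2 = n+1 := by omega
  rw [hk] at hdvd
  obtain ⟨b, rfl⟩ := hdvd
  set u : ℤ := (b + 2^(n+1))^2 - 2*a₁^2 with hu
  have hδ : (2^(n+1)*b + 2 * 2^(2*n+1))^2 - 4 * 2^(2*n+1) * a₁^2 = (2^(n+1))^2 * u := by
    rw [hu]; ring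
  rw [hδ]
  intro hsq
  -- reduce to IsSquare (u : ℤ_[2])
  have husq : IsSquare ((u : ℤ_[2])) := by
    obtain ⟨c, hc⟩ := hsq
    push_cast at hc
    have hs0 : ((2:ℤ_[2])^(n+1)) ≠ 0 := pow_ne_zero _ two_ne_zero
    have hdvd2 : ((2:ℤ_[2])^(n+1))^2 ∣ c^2 := ⟨u, by rw [sq, ← hc]⟩
    have hdvd1 : ((2:ℤ_[2])^(n+1)) ∣ c := by
      exact (IsIntegrallyClosed.pow_dvd_pow_iff (n := 2) two_ne_zero).mp hdvd2
    obtain ⟨d, rfl⟩ := hdvd1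
    refine ⟨d, ?_⟩
    have h2 : ((2:ℤ_[2])^(n+1))^2 * (u : ℤ_[2]) = ((2:ℤ_[2])^(n+1))^2 * (d*d) := by
      rw [hc]; ring
    exact mul_left_cancel₀ (pow_ne_zero _ hs0) h2
  refine notsq_aux u ?_ husq
  obtain ⟨s, hs⟩ := odd_sq_mod8 a₁ ha
  rcases Int.even_or_odd (b + 2^(n+1)) with ⟨w, hw⟩ | hodd
  · -- even case
    rcases Int.even_or_odd w with ⟨z, hz⟩ | ⟨z, hz⟩
    · have : u = 16*z^2 - 16*s - 2 := by rw [hu, hw, hz]; nlinarith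
      omega
    · have : u = 16*z^2 + 16*z + 4 - 16*s - 2 := by rw [hu, hw, hz]; nlinarith
      omega
  · obtain ⟨s', hs'⟩ := odd_sq_mod8 _ hodd
    have : u = 8*s' + 1 - 16*s - 2 := by rw [hu, hs']; omega
    omega
end

section
/- Let q = 2^m with m > 2 and let a, b, c ∈ F_q. Then the sum over all nonzero x ∈ F_q of the absolute trace Tr(a/x + bx + cx³) from F_q to F₂ equals 0. -/
open scoped Classical
open Finset

/-!
Since `Tr` is additive and the summand vanishes at `x = 0` (where `a / 0 = 0`), the sum is the
trace of `a ∑ x⁻¹ + b ∑ x + c ∑ x³` over the whole field. Inversion permutes `F_q`, so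
`∑ x⁻¹ = ∑ x`, and `∑ x ^ i = 0` for `i < q - 1`; both exponents `1` and `3` qualify once `q > 4`.
-/

namespace FiniteField

variable {K : Type*} [Field K] [Fintype K]

theorem sum_inv_eq_sum : ∑ x : K, x⁻¹ = ∑ x : K, x :=
  Fintype.sum_equiv (Equiv.inv K) _ _ fun _ => rfl

theorem sum_div_add_mul_add_mul_pow_three_eq_zero (hK : 4 < Fintype.card K) (a b c : K) :
    ∑ x : K, (a / x + b * x + c * x ^ 3) = 0 := by
  have sum_id : ∑ x : K, x = 0 := by simpa using sum_pow_lt_card_sub_one K 1 (by omega)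
  have sum_cube : ∑ x : K, x ^ 3 = 0 := sum_pow_lt_card_sub_one K 3 (by omega)
  simp only [div_eq_mul_inv, sum_add_distrib]
  rw [← mul_sum, ← mul_sum, ← mul_sum, sum_inv_eq_sum, sum_id, sum_cube]
  ring

end FiniteField

theorem stmt_12 (m : ℕ) (hm : 2 < m) [Fintype (GaloisField 2 m)]
    (a b c : GaloisField 2 m) :
    ∑ x ∈ Finset.univ.filter (fun x : GaloisField 2 m => x ≠ 0),
      Algebra.trace (ZMod 2) (GaloisField 2 m) (a / x + b * x + c * x^3) = 0 := by
  have hcard : 4 < Fintype.card (GaloisField 2 m) := by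
    rw [Fintype.card_eq_nat_card, GaloisField.card 2 m (by omega)]
    calc 4 < 2 ^ 3 := by norm_num
      _ ≤ 2 ^ m := Nat.pow_le_pow_right two_pos hm
  have vanishes_at_zero : ∀ x ∈ univ, Algebra.trace (ZMod 2) (GaloisField 2 m)
      (a / x + b * x + c * x ^ 3) ≠ 0 → x ≠ 0 := by
    rintro x - hx rfl
    simp at hx
  rw [sum_filter_of_ne vanishes_at_zero, ← map_sum,
    FiniteField.sum_div_add_mul_add_mul_pow_three_eq_zero hcard, map_zero]
end

section
/- (BCH bound, binary case) Let n = 2^m − 1, let α be a generator of the multiplicative group of F_{2^m}, and let f(x) ∈ F₂[x] be a nonzero polynomial of degree < n. If there exist an integer b and an integer s ≥ 1 such that f(α^{b+j}) = 0 for j = 0, 1, …, s−1, then the number of nonzero coefficients of f is at least s + 1. -/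
theorem stmt_15 (m : ℕ) (hm : 1 ≤ m) (α : (GaloisField 2 m)ˣ)
    (hα : ∀ x : (GaloisField 2 m)ˣ, x ∈ Subgroup.zpowers α)
    (f : Polynomial (ZMod 2)) (hf : f ≠ 0)
    (hdeg : f.natDegree < 2^m - 1)
    (b : ℤ) (s : ℕ) (hs : 1 ≤ s)
    (hroots : ∀ j : ℕ, j < s →
      Polynomial.aeval ((α ^ (b + j) : (GaloisField 2 m)ˣ) : GaloisField 2 m) f = 0) :
    s + 1 ≤ f.support.card := by
  by_contra hcon
  push_neg at hcon
  set K := GaloisField 2 m with hK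
  have hm0 : m ≠ 0 := by omega
  have hord : orderOf α = 2 ^ m - 1 := by
    rw [orderOf_eq_card_of_forall_mem_zpowers hα, Nat.card_units,
      GaloisField.card 2 m hm0]
  set w := f.support.card with hw
  have hws : w ≤ s := by omega
  have hw1 : 0 < w := Finset.card_pos.2 (Polynomial.support_nonempty.2 hf)
  let e : Fin w ≃o f.support := f.support.orderIsoOfFin hw.symm
  let ι : Fin w → ℕ := fun k => (e k : ℕ)
  have hι_lt : ∀ k, ι k < orderOf α := fun k => by
    rw [hord]
    exact lt_of_le_of_lt (Polynomial.le_natDegree_of_mem_supp _ (e k).2) hdeg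
  have hι_inj : Function.Injective ι := fun k k' h => by
    have : e k = e k' := Subtype.ext h
    exact e.injective this
  let x : Fin w → K := fun k => ((α : K)) ^ ι k
  have hx_inj : Function.Injective x := by
    intro k k' h
    have hu : (α ^ ι k : Kˣ) = α ^ ι k' := Units.ext (by
      simpa [x, Units.val_pow_eq_pow_val] using h)
    exact hι_inj (pow_injOn_Iio_orderOf (hι_lt k) (hι_lt k') hu)
  let d : Fin w → K := fun k => ((α ^ (b * ι k) : Kˣ) : K)
  -- the key linear relations
  have key : ∀ j : Fin w, ∑ k, x k ^ (j : ℕ) * d k = 0 := by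
    intro j
    have hj : (j : ℕ) < s := lt_of_lt_of_le j.isLt hws
    have h0 := hroots j hj
    have hone : ∀ a : ZMod 2, a ≠ 0 → a = 1 := by decide
    set y : K := ((α ^ (b + (j : ℕ)) : Kˣ) : K) with hy
    have h1 : ∑ i ∈ f.support, y ^ i = 0 := by
      rw [Polynomial.aeval_def, Polynomial.eval₂_eq_sum, Polynomial.sum_def] at h0
      rw [← h0]
      refine Finset.sum_congr rfl fun i hi => ?_
      rw [hone _ (Polynomial.mem_support_iff.1 hi), map_one, one_mul]
    have h2 : ∑ k : Fin w, y ^ ι k = ∑ i ∈ f.support, y ^ i := by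
      rw [← Finset.sum_coe_sort f.support (fun i => y ^ i)]
      exact Fintype.sum_equiv e.toEquiv _ _ (fun k => rfl)
    have h3 : ∀ k : Fin w, y ^ ι k = x k ^ (j : ℕ) * d k := by
      intro k
      have hunit : (α ^ (b + (j : ℕ))) ^ ι k
          = (α ^ ι k) ^ (j : ℕ) * α ^ (b * ι k) := by
        have hexp : (b + (j : ℕ)) * (ι k : ℤ) = ((ι k * j : ℕ) : ℤ) + b * ι k := by
          push_cast; ring
        calc (α ^ (b + (j : ℕ))) ^ ι k
            = α ^ ((b + (j : ℕ)) * (ι k : ℤ)) := by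
              rw [← zpow_natCast (α ^ (b + (j : ℕ))) (ι k), ← zpow_mul]
          _ = α ^ (((ι k * j : ℕ) : ℤ)) * α ^ (b * ι k) := by rw [hexp, zpow_add]
          _ = (α ^ ι k) ^ (j : ℕ) * α ^ (b * ι k) := by
              rw [zpow_natCast, pow_mul]
      have := congrArg (Units.val) hunit
      simpa [x, d, y, Units.val_pow_eq_pow_val, mul_comm] using this
    calc ∑ k : Fin w, x k ^ (j : ℕ) * d k
        = ∑ k : Fin w, y ^ ι k := Finset.sum_congr rfl fun k _ => (h3 k).symm
      _ = 0 := by rw [h2, h1]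
  -- Vandermonde matrix
  let M : Matrix (Fin w) (Fin w) K := fun j k => x k ^ (j : ℕ)
  have hdet : M.det ≠ 0 := by
    have hM : M = (Matrix.vandermonde x).transpose := by
      ext j k; simp [M, Matrix.vandermonde, Matrix.transpose]
    rw [hM, Matrix.det_transpose, Matrix.det_vandermonde]
    refine Finset.prod_ne_zero_iff.2 fun i _ => Finset.prod_ne_zero_iff.2 fun k hk => ?_
    have : x k ≠ x i := fun h => by
      have hki : k = i := hx_inj h
      subst hki
      exact lt_irrefl k (Finset.mem_Ioi.1 hk)
    exact sub_ne_zero.2 this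
  have hmul : M.mulVec d = 0 := by
    ext j
    simpa [M, Matrix.mulVec, dotProduct] using key j
  have hd0 : d = 0 := Matrix.eq_zero_of_mulVec_eq_zero hdet hmul
  have : d ⟨0, hw1⟩ = 0 := by rw [hd0]; rfl
  exact Units.ne_zero _ this
end
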